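/- There exist absolute constants c' > 0 and d > 1 with the following property. Let A, A₁ be n×n real matrices, let P be a symmetric positive definite n×n matrix and Q a symmetric positive definite n×n matrix satisfying (A + A₁)ᵀP + P(A + A₁) = −Q, and set V(y) = yᵀ P y. If Δ > 0 satisfies Δ ≤ c' · σ_min(Q) / (σ_max(P) · (σ_max(A) + σ_max(A₁))²), then for every interval [t_k, t_{k+1}] with t_{k+1} − t_k ≤ Δ and every continuous x : [t_k, t_{k+1}] → ℝⁿ differentiable with derivative ẋ(t) = A x(t) + A₁ x(t_k) on the interval, one has, for all t ∈ [t_k, t_{k+1}], V(x(t)) − V(x(t_k)) ≤ −(t − t_k) · (σ_min(Q)/d) · ‖x(t_k)‖₂ · sup_{s ∈ [t_k, t_{k+1}]} ‖x(s)‖₂. -/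

import Mathlib

/-!
Write `V(y) = ⟪y, P y⟫` and `σ = σ_max A + σ_max A₁`. Splitting the field as
`A x + A₁ x(t_k) = (A + A₁) x + A₁ (x(t_k) - x)`, the Lyapunov equation gives
`V' = -⟪x, Q x⟫ + 2 ⟪A₁ (x(t_k) - x), P x⟫`. On a hold interval the state drifts from `x(t_k)` by
at most `e M`, where `e = Δ σ` and `M = sup ‖x‖`. Testing the Lyapunov equation on a unit vector
gives `σ_min Q ≤ 2 σ_max P σ`, so the hold bound (with `c' = 1/32`) forces `e ≤ 1/16` and bounds the
cross term by `σ_min Q M² / 16`. Then `‖x(s)‖ ≥ 7M/8` throughout, hence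
`V' ≤ -(σ_min Q / 2) ‖x(t_k)‖ M`, and integrating gives the claim with `d = 2`.
-/
open Matrix Filter

/-- A matrix acting on Euclidean space (so that `‖·‖` is the Euclidean norm). -/
noncomputable def mulVecE {n : ℕ} (M : Matrix (Fin n) (Fin n) ℝ)
    (x : EuclideanSpace ℝ (Fin n)) : EuclideanSpace ℝ (Fin n) :=
  WithLp.toLp 2 (M.mulVec x)

/-- The largest singular value of `M`, i.e. its ℓ²→ℓ² operator norm. -/
noncomputable def sigmaMax {n : ℕ} (M : Matrix (Fin n) (Fin n) ℝ) : ℝ :=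
  ‖Matrix.toEuclideanCLM (𝕜 := ℝ) (n := Fin n) M‖

/-- The smallest eigenvalue of a symmetric matrix, via the Rayleigh quotient. -/
noncomputable def sigmaMin {n : ℕ} (Q : Matrix (Fin n) (Fin n) ℝ) : ℝ :=
  sInf {r : ℝ | ∃ x : EuclideanSpace ℝ (Fin n), ‖x‖ = 1 ∧ inner (𝕜 := ℝ) x (mulVecE Q x) = r}

/-- An admissible sampling sequence for hold length `Δ`:
`t 0 = 0`, strictly increasing, steps at most `Δ`, tending to infinity. -/
def AdmissibleSampling (Δ : ℝ) (t : ℕ → ℝ) : Prop :=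
  t 0 = 0 ∧ StrictMono t ∧ (∀ k, t (k + 1) - t k ≤ Δ) ∧
    Filter.Tendsto t Filter.atTop Filter.atTop

/-- A solution of the sampled-data system `ẋ(t) = A x(t) + A₁ x(t_k)` on `[0,∞)`. -/
def IsSolution {n : ℕ} (A A₁ : Matrix (Fin n) (Fin n) ℝ) (t : ℕ → ℝ)
    (x : ℝ → EuclideanSpace ℝ (Fin n)) : Prop :=
  ContinuousOn x (Set.Ici 0) ∧
  ∀ k : ℕ, ∀ s ∈ Set.Icc (t k) (t (k + 1)),
    HasDerivWithinAt x (mulVecE A (x s) + mulVecE A₁ (x (t k)))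
      (Set.Icc (t k) (t (k + 1))) s

open scoped InnerProductSpace

section MulVecE

variable {n : ℕ}

theorem mulVecE_eq_toEuclideanCLM (M : Matrix (Fin n) (Fin n) ℝ) (x : EuclideanSpace ℝ (Fin n)) :
    mulVecE M x = Matrix.toEuclideanCLM (𝕜 := ℝ) M x := rfl

theorem norm_mulVecE_le (M : Matrix (Fin n) (Fin n) ℝ) (x : EuclideanSpace ℝ (Fin n)) :
    ‖mulVecE M x‖ ≤ sigmaMax M * ‖x‖ :=
  (Matrix.toEuclideanCLM (𝕜 := ℝ) M).le_opNorm x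

theorem sigmaMax_nonneg (M : Matrix (Fin n) (Fin n) ℝ) : 0 ≤ sigmaMax M := norm_nonneg _

theorem sigmaMax_add_le (M N : Matrix (Fin n) (Fin n) ℝ) :
    sigmaMax (M + N) ≤ sigmaMax M + sigmaMax N := by
  simp only [sigmaMax, map_add]
  exact norm_add_le _ _

theorem mulVecE_add (M N : Matrix (Fin n) (Fin n) ℝ) (x : EuclideanSpace ℝ (Fin n)) :
    mulVecE (M + N) x = mulVecE M x + mulVecE N x := by
  rw [mulVecE_eq_toEuclideanCLM, map_add]; rfl

theorem mulVecE_neg (M : Matrix (Fin n) (Fin n) ℝ) (x : EuclideanSpace ℝ (Fin n)) :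
    mulVecE (-M) x = -mulVecE M x := by
  rw [mulVecE_eq_toEuclideanCLM, map_neg]; rfl

theorem mulVecE_mul (M N : Matrix (Fin n) (Fin n) ℝ) (x : EuclideanSpace ℝ (Fin n)) :
    mulVecE (M * N) x = mulVecE M (mulVecE N x) := by
  rw [mulVecE_eq_toEuclideanCLM, map_mul]; rfl

theorem mulVecE_sub_right (M : Matrix (Fin n) (Fin n) ℝ) (x y : EuclideanSpace ℝ (Fin n)) :
    mulVecE M (x - y) = mulVecE M x - mulVecE M y :=
  map_sub (Matrix.toEuclideanCLM (𝕜 := ℝ) M) x y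

theorem mulVecE_smul_right (M : Matrix (Fin n) (Fin n) ℝ) (c : ℝ) (x : EuclideanSpace ℝ (Fin n)) :
    mulVecE M (c • x) = c • mulVecE M x :=
  map_smul (Matrix.toEuclideanCLM (𝕜 := ℝ) M) c x

theorem inner_mulVecE_left (M : Matrix (Fin n) (Fin n) ℝ) (x y : EuclideanSpace ℝ (Fin n)) :
    ⟪mulVecE M x, y⟫_ℝ = ⟪x, mulVecE Mᵀ y⟫_ℝ := by
  have hadj : Matrix.toEuclideanCLM (𝕜 := ℝ) Mᵀ =
      ContinuousLinearMap.adjoint (Matrix.toEuclideanCLM (𝕜 := ℝ) M) := by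
    rw [← ContinuousLinearMap.star_eq_adjoint, ← map_star, Matrix.star_eq_conjTranspose,
      Matrix.conjTranspose_eq_transpose_of_trivial]
  rw [mulVecE_eq_toEuclideanCLM, mulVecE_eq_toEuclideanCLM, hadj,
    ContinuousLinearMap.adjoint_inner_right]

theorem Matrix.IsSymm.inner_mulVecE_comm {P : Matrix (Fin n) (Fin n) ℝ} (hP : P.IsSymm)
    (x y : EuclideanSpace ℝ (Fin n)) : ⟪x, mulVecE P y⟫_ℝ = ⟪y, mulVecE P x⟫_ℝ := by
  rw [real_inner_comm, inner_mulVecE_left, hP.eq]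

theorem Matrix.IsSymm.inner_mulVecE_lyapunov {P : Matrix (Fin n) (Fin n) ℝ} (hP : P.IsSymm)
    (B : Matrix (Fin n) (Fin n) ℝ) (z : EuclideanSpace ℝ (Fin n)) :
    ⟪z, mulVecE (Bᵀ * P + P * B) z⟫_ℝ = 2 * ⟪mulVecE B z, mulVecE P z⟫_ℝ := by
  rw [mulVecE_add, inner_add_right, mulVecE_mul, mulVecE_mul, ← inner_mulVecE_left,
    hP.inner_mulVecE_comm]
  ring

end MulVecE

section SigmaMin

variable {n : ℕ} {Q : Matrix (Fin n) (Fin n) ℝ}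

theorem neg_sigmaMax_le_inner_mulVecE {x : EuclideanSpace ℝ (Fin n)} (hx : ‖x‖ = 1) :
    -sigmaMax Q ≤ ⟪x, mulVecE Q x⟫_ℝ := by
  have h := (abs_real_inner_le_norm x (mulVecE Q x)).trans
    (mul_le_mul_of_nonneg_left (norm_mulVecE_le Q x) (norm_nonneg x))
  rw [hx, one_mul, mul_one] at h
  exact neg_le_of_abs_le h

theorem sigmaMin_le_inner_mulVecE {x : EuclideanSpace ℝ (Fin n)} (hx : ‖x‖ = 1) :
    sigmaMin Q ≤ ⟪x, mulVecE Q x⟫_ℝ :=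
  csInf_le ⟨-sigmaMax Q, by rintro _ ⟨y, hy, rfl⟩; exact neg_sigmaMax_le_inner_mulVecE hy⟩
    ⟨x, hx, rfl⟩

theorem sigmaMin_mul_norm_sq_le (z : EuclideanSpace ℝ (Fin n)) :
    sigmaMin Q * ‖z‖ ^ 2 ≤ ⟪z, mulVecE Q z⟫_ℝ := by
  rcases eq_or_ne z 0 with rfl | hz
  · simp
  have hnz : ‖z‖ ≠ 0 := norm_ne_zero_iff.2 hz
  set u := ‖z‖⁻¹ • z
  have hu : ‖u‖ = 1 := by rw [norm_smul, norm_inv, norm_norm, inv_mul_cancel₀ hnz]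
  have hzu : z = ‖z‖ • u := by rw [smul_smul, mul_inv_cancel₀ hnz, one_smul]
  have hquad : ⟪z, mulVecE Q z⟫_ℝ = ‖z‖ ^ 2 * ⟪u, mulVecE Q u⟫_ℝ := by
    conv_lhs => rw [hzu, mulVecE_smul_right, real_inner_smul_left, real_inner_smul_right]
    ring
  rw [hquad, mul_comm]
  exact mul_le_mul_of_nonneg_left (sigmaMin_le_inner_mulVecE hu) (sq_nonneg _)

theorem sigmaMin_le_of_forall_inner_mulVecE_le {c : ℝ} (hc : 0 ≤ c)
    (h : ∀ x : EuclideanSpace ℝ (Fin n), ‖x‖ = 1 → ⟪x, mulVecE Q x⟫_ℝ ≤ c) : sigmaMin Q ≤ c := by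
  by_cases hunit : ∃ x : EuclideanSpace ℝ (Fin n), ‖x‖ = 1
  · obtain ⟨x, hx⟩ := hunit
    exact (sigmaMin_le_inner_mulVecE hx).trans (h x hx)
  · have hempty : {r : ℝ | ∃ x : EuclideanSpace ℝ (Fin n), ‖x‖ = 1 ∧
        ⟪x, mulVecE Q x⟫_ℝ = r} = ∅ :=
      Set.eq_empty_of_forall_notMem fun _ ⟨x, hx, _⟩ => hunit ⟨x, hx⟩
    rw [sigmaMin, hempty, Real.sInf_empty]
    exact hc

theorem sigmaMin_le_of_lyapunov {B P : Matrix (Fin n) (Fin n) ℝ} (hP : P.IsSymm)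
    (hBPQ : Bᵀ * P + P * B = -Q) : sigmaMin Q ≤ 2 * (sigmaMax B * sigmaMax P) := by
  refine sigmaMin_le_of_forall_inner_mulVecE_le
    (by positivity [sigmaMax_nonneg B, sigmaMax_nonneg P]) fun x hx => ?_
  have hQ : ⟪x, mulVecE Q x⟫_ℝ = -(2 * ⟪mulVecE B x, mulVecE P x⟫_ℝ) := by
    rw [← neg_neg Q, ← hBPQ, mulVecE_neg, inner_neg_right, hP.inner_mulVecE_lyapunov]
  have hBP := (abs_real_inner_le_norm (mulVecE B x) (mulVecE P x)).trans
    (mul_le_mul (norm_mulVecE_le B x) (norm_mulVecE_le P x) (norm_nonneg _)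
      (by positivity [sigmaMax_nonneg B]))
  rw [hx, mul_one, mul_one] at hBP
  linarith [neg_abs_le ⟪mulVecE B x, mulVecE P x⟫_ℝ]

end SigmaMin

theorem image_sub_le_mul_sub_of_hasDerivWithinAt_le {f f' : ℝ → ℝ} {a b C : ℝ}
    (hf : ∀ x ∈ Set.Icc a b, HasDerivWithinAt f (f' x) (Set.Icc a b) x)
    (bound : ∀ x ∈ Set.Ico a b, f' x ≤ C) :
    ∀ x ∈ Set.Icc a b, f x - f a ≤ C * (x - a) := by
  have hB : ∀ x, HasDerivAt (fun y => f a + C * (y - a)) C x := fun x => by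
    simpa using ((hasDerivAt_id x).sub_const a).const_mul C |>.const_add (f a)
  intro x hx
  have := image_le_of_deriv_right_le_deriv_boundary (fun y hy => (hf y hy).continuousWithinAt)
    (fun y hy => (hf y (Set.Ico_subset_Icc_self hy)).mono_of_mem_nhdsWithin
      (Icc_mem_nhdsGE_of_mem hy))
    (by simp) (fun y _ => (hB y).continuousAt.continuousWithinAt)
    (fun y _ => (hB y).hasDerivWithinAt) bound hx
  linarith

/-- Read `z = ‖x(s)‖`, `w = ‖x(t_k)‖`, `r = ‖x(t_k) - x(s)‖` and `M` the sup of `‖x‖`: then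
`z ≥ w - e M ≥ (1 - 2e) M ≥ 7M/8`. -/
theorem neg_mul_sq_add_le_of_near_sup {q c e z w M r : ℝ} (hc : 0 ≤ c) (he : 0 ≤ e)
    (he16 : e ≤ 1 / 16) (hce : c * e ≤ q / 16) (hz : 0 ≤ z) (hzM : z ≤ M) (hwM : w ≤ M)
    (hMw : M ≤ w + e * M) (hwz : w ≤ z + e * M) (hr : r ≤ e * M) :
    -(q * z ^ 2) + c * r * z ≤ -(q / 2) * w * M := by
  have hM : 0 ≤ M := hz.trans hzM
  have hq : 0 ≤ q := by nlinarith
  have hcross : c * r * z ≤ q / 16 * M ^ 2 := by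
    calc c * r * z ≤ c * (e * M) * M := by gcongr
      _ = c * e * M ^ 2 := by ring
      _ ≤ q / 16 * M ^ 2 := by gcongr
  have hz78 : 7 / 8 * M ≤ z := by nlinarith
  nlinarith [mul_le_mul hz78 hz78 (by positivity) hz, mul_le_mul_of_nonneg_left hwM hM]

section Sampled

variable {n : ℕ} {A A₁ P Q : Matrix (Fin n) (Fin n) ℝ}

theorem HasDerivWithinAt.inner_mulVecE_self (hP : P.IsSymm) {x : ℝ → EuclideanSpace ℝ (Fin n)}
    {v : EuclideanSpace ℝ (Fin n)} {S : Set ℝ} {s : ℝ} (hx : HasDerivWithinAt x v S s) :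
    HasDerivWithinAt (fun r => ⟪x r, mulVecE P (x r)⟫_ℝ) (2 * ⟪v, mulVecE P (x s)⟫_ℝ) S s := by
  refine (hx.inner ℝ ((Matrix.toEuclideanCLM (𝕜 := ℝ) P).hasFDerivAt.comp_hasDerivWithinAt s
    hx)).congr_deriv ?_
  rw [Function.comp_apply, ← mulVecE_eq_toEuclideanCLM, ← mulVecE_eq_toEuclideanCLM,
    hP.inner_mulVecE_comm]
  ring

theorem inner_sampled_field_le (hP : P.IsSymm) (hPQ : (A + A₁)ᵀ * P + P * (A + A₁) = -Q)
    (z w : EuclideanSpace ℝ (Fin n)) :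
    2 * ⟪mulVecE A z + mulVecE A₁ w, mulVecE P z⟫_ℝ ≤
      -(sigmaMin Q * ‖z‖ ^ 2) + 2 * (sigmaMax A₁ * sigmaMax P) * ‖w - z‖ * ‖z‖ := by
  have hsplit : mulVecE A z + mulVecE A₁ w = mulVecE (A + A₁) z + mulVecE A₁ (w - z) := by
    rw [mulVecE_add, mulVecE_sub_right]
    abel
  have hlyap : 2 * ⟪mulVecE (A + A₁) z, mulVecE P z⟫_ℝ = -⟪z, mulVecE Q z⟫_ℝ := by
    rw [← hP.inner_mulVecE_lyapunov, hPQ, mulVecE_neg, inner_neg_right]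
  have hcross : ⟪mulVecE A₁ (w - z), mulVecE P z⟫_ℝ ≤ sigmaMax A₁ * ‖w - z‖ * (sigmaMax P * ‖z‖) :=
    (real_inner_le_norm _ _).trans (mul_le_mul (norm_mulVecE_le A₁ _) (norm_mulVecE_le P z)
      (norm_nonneg _) (by positivity [sigmaMax_nonneg A₁]))
  rw [hsplit, inner_add_left, mul_add, hlyap]
  linarith [sigmaMin_mul_norm_sq_le (Q := Q) z]

theorem norm_sampled_field_le {z w : EuclideanSpace ℝ (Fin n)} {M : ℝ} (hz : ‖z‖ ≤ M)
    (hw : ‖w‖ ≤ M) : ‖mulVecE A z + mulVecE A₁ w‖ ≤ (sigmaMax A + sigmaMax A₁) * M := by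
  calc ‖mulVecE A z + mulVecE A₁ w‖ ≤ sigmaMax A * ‖z‖ + sigmaMax A₁ * ‖w‖ :=
        (norm_add_le _ _).trans (add_le_add (norm_mulVecE_le A z) (norm_mulVecE_le A₁ w))
    _ ≤ (sigmaMax A + sigmaMax A₁) * M := by
      rw [add_mul]
      gcongr
      exacts [sigmaMax_nonneg A, sigmaMax_nonneg A₁]

theorem lyapunov_sub_le_of_hold (hP : P.IsSymm) (hPQ : (A + A₁)ᵀ * P + P * (A + A₁) = -Q)
    {a b e : ℝ} (he : e ≤ 1 / 16) (hhold : (b - a) * (sigmaMax A + sigmaMax A₁) ≤ e)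
    (hcross : 2 * (sigmaMax A₁ * sigmaMax P) * e ≤ sigmaMin Q / 16)
    {x : ℝ → EuclideanSpace ℝ (Fin n)} (hxc : ContinuousOn x (Set.Icc a b))
    (hx : ∀ s ∈ Set.Icc a b,
      HasDerivWithinAt x (mulVecE A (x s) + mulVecE A₁ (x a)) (Set.Icc a b) s) :
    ∀ t ∈ Set.Icc a b, ⟪x t, mulVecE P (x t)⟫_ℝ - ⟪x a, mulVecE P (x a)⟫_ℝ ≤
      -(t - a) * (sigmaMin Q / 2) * ‖x a‖ * sSup ((fun s => ‖x s‖) '' Set.Icc a b) := by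
  intro t ht
  have hab : a ≤ b := ht.1.trans ht.2
  have ha : a ∈ Set.Icc a b := Set.left_mem_Icc.2 hab
  set M := sSup ((fun s => ‖x s‖) '' Set.Icc a b)
  have hle_M : ∀ s ∈ Set.Icc a b, ‖x s‖ ≤ M := fun s hs =>
    le_csSup (isCompact_Icc.image_of_continuousOn hxc.norm).bddAbove ⟨s, hs, rfl⟩
  have hM : 0 ≤ M := (norm_nonneg _).trans (hle_M a ha)
  have hσ := add_nonneg (sigmaMax_nonneg A) (sigmaMax_nonneg A₁)
  have he0 : 0 ≤ e := (mul_nonneg (sub_nonneg.2 hab) hσ).trans hhold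
  have hdrift : ∀ s ∈ Set.Icc a b, ‖x s - x a‖ ≤ e * M := fun s hs => by
    have := norm_image_sub_le_of_norm_deriv_le_segment' hx
      (fun r hr => norm_sampled_field_le (hle_M r (Set.Ico_subset_Icc_self hr)) (hle_M a ha)) s hs
    have hsa : (s - a) * (sigmaMax A + sigmaMax A₁) ≤ e :=
      (mul_le_mul_of_nonneg_right (by linarith [hs.2]) hσ).trans hhold
    nlinarith [mul_le_mul_of_nonneg_right hsa hM]
  have hMa : M ≤ ‖x a‖ + e * M := csSup_le ((Set.nonempty_Icc.2 hab).image _) <| by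
    rintro _ ⟨s, hs, rfl⟩
    linarith [norm_le_norm_add_norm_sub' (x s) (x a), hdrift s hs]
  have hrate : ∀ s ∈ Set.Ico a b, 2 * ⟪mulVecE A (x s) + mulVecE A₁ (x a), mulVecE P (x s)⟫_ℝ ≤
      -(sigmaMin Q / 2) * ‖x a‖ * M := fun s hs => by
    have hs' := Set.Ico_subset_Icc_self hs
    refine (inner_sampled_field_le hP hPQ (x s) (x a)).trans
      (neg_mul_sq_add_le_of_near_sup (by positivity [sigmaMax_nonneg A₁, sigmaMax_nonneg P]) he0
        he hcross (norm_nonneg _) (hle_M s hs') (hle_M a ha) hMa ?_ ?_)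
    · linarith [norm_le_norm_add_norm_sub' (x a) (x s), norm_sub_rev (x a) (x s), hdrift s hs']
    · rw [norm_sub_rev]
      exact hdrift s hs'
  have := image_sub_le_mul_sub_of_hasDerivWithinAt_le
    (fun s hs => (hx s hs).inner_mulVecE_self hP) hrate t ht
  linarith

end Sampled

/-- under the hold-length bound, the Lyapunov function `V(y) = yᵀ P y`
has a sufficient decrease along the trajectory within a holding period. -/
theorem lyapunov_sufficient_decrease :
    ∃ c' d : ℝ, 0 < c' ∧ 1 < d ∧
      ∀ (n : ℕ) (A A₁ P Q : Matrix (Fin n) (Fin n) ℝ),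
        P.PosDef → Q.PosDef →
        (A + A₁)ᵀ * P + P * (A + A₁) = -Q →
        ∀ Δ : ℝ, 0 < Δ →
          Δ ≤ c' * sigmaMin Q / (sigmaMax P * (sigmaMax A + sigmaMax A₁) ^ 2) →
          ∀ tk tk1 : ℝ, tk ≤ tk1 → tk1 - tk ≤ Δ →
          ∀ x : ℝ → EuclideanSpace ℝ (Fin n),
            ContinuousOn x (Set.Icc tk tk1) →
            (∀ s ∈ Set.Icc tk tk1,
              HasDerivWithinAt x (mulVecE A (x s) + mulVecE A₁ (x tk)) (Set.Icc tk tk1) s) →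
            ∀ t ∈ Set.Icc tk tk1,
              (inner (𝕜 := ℝ) (x t) (mulVecE P (x t)) : ℝ) -
                  (inner (𝕜 := ℝ) (x tk) (mulVecE P (x tk)) : ℝ) ≤
                -(t - tk) * (sigmaMin Q / d) *
                  ‖x tk‖ * sSup ((fun s => ‖x s‖) '' Set.Icc tk tk1) := by
  refine ⟨1 / 32, 2, by norm_num, by norm_num, ?_⟩
  intro n A A₁ P Q hP _ hPQ Δ hΔ hΔle tk tk1 _ hhold x hxc hx
  have hPs : P.IsSymm := by simpa using hP.isHermitian
  set σ := sigmaMax A + sigmaMax A₁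
  have hσ : 0 ≤ σ := add_nonneg (sigmaMax_nonneg A) (sigmaMax_nonneg A₁)
  have hA₁ : sigmaMax A₁ ≤ σ := le_add_of_nonneg_left (sigmaMax_nonneg A)
  have hden : 0 < sigmaMax P * σ ^ 2 := by
    refine (by positivity [sigmaMax_nonneg P] : 0 ≤ sigmaMax P * σ ^ 2).lt_of_ne fun h => ?_
    rw [← h, div_zero] at hΔle
    linarith
  have hΔσ : Δ * (sigmaMax P * σ ^ 2) ≤ 1 / 32 * sigmaMin Q := (le_div_iff₀ hden).1 hΔle
  have hQ : sigmaMin Q ≤ 2 * (σ * sigmaMax P) := by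
    have := sigmaMax_add_le A A₁
    nlinarith [sigmaMin_le_of_lyapunov hPs hPQ, sigmaMax_nonneg P]
  have he : Δ * σ ≤ 1 / 16 := by
    have hPσ : 0 < sigmaMax P * σ := by nlinarith [sigmaMax_nonneg P]
    nlinarith
  have hcross : 2 * (sigmaMax A₁ * sigmaMax P) * (Δ * σ) ≤ sigmaMin Q / 16 := by
    nlinarith [mul_le_mul_of_nonneg_right hA₁
      (mul_nonneg (sigmaMax_nonneg P) (mul_nonneg hΔ.le hσ))]
  exact lyapunov_sub_le_of_hold hPs hPQ he (by gcongr) hcross hxc hx
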